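/- Let s and e be composable labelled transition systems with s and e mutually accepting, let ℓ ∈ (L_s ∩ L_e) ∪ {δ}, let p1, p2 ∈ Q_s and q1, q2 ∈ Q_e, and suppose there exists σ ∈ Utraces(s ‖ e) with s ‖ e ⟹σ p1 ‖ q1. If p1 ‖ q1 —ℓ→ p2 ‖ q2, then p1 —ℓ→ p2 and q1 —ℓ→ q2. -/

import Mathlib

/-- Visible labels extended with the quiescence label `δ`. -/
inductive DLabel (A : Type) where
  | act : A → DLabel A
  | δ : DLabel A
deriving DecidableEq

/-- A labelled transition system with state type `S` and label type `A`.
`T p none p'` is an internal (τ) transition; `T p (some a) p'` a visible one.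
The set of states is the whole type `S`; the initial state is `q0`. -/
structure LTS (S : Type) (A : Type) where
  T : S → Option A → S → Prop
  I : Set A
  U : Set A
  q0 : S

namespace LTS

variable {S E F A : Type}

/-- The set of visible labels. -/
def L (s : LTS S A) : Set A := s.I ∪ s.U

/-- Well-formedness of an LTS: countably many states and labels, inputs and
outputs disjoint, and visible transitions labelled in `I ∪ U`. -/
def WF (s : LTS S A) : Prop :=
  Countable S ∧ s.I.Countable ∧ s.U.Countable ∧ Disjoint s.I s.U ∧
    ∀ p a q, s.T p (some a) q → a ∈ s.L

/-- A state is quiescent if it has no output transitions and no τ-transitions. -/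
def quiescent (s : LTS S A) (p : S) : Prop :=
  (∀ x ∈ s.U, ∀ p', ¬ s.T p (some x) p') ∧ (∀ p', ¬ s.T p none p')

/-- Single-step transition relation for δ-extended labels: `δ` is a self-loop
on quiescent states. -/
def dstep (s : LTS S A) (p : S) : DLabel A → S → Prop
  | .act a, p' => s.T p (some a) p'
  | .δ, p' => p = p' ∧ s.quiescent p

/-- `eps p p'`: `p'` is reachable from `p` by finitely many τ-transitions. -/
def eps (s : LTS S A) : S → S → Prop :=
  Relation.ReflTransGen (fun p q => s.T p none q)

/-- Weak transition relation `p ⟹σ p'` over δ-extended traces. -/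
def wtrans (s : LTS S A) : S → List (DLabel A) → S → Prop
  | p, [], p' => s.eps p p'
  | p, ℓ :: σ, p'' => ∃ p1 p2, s.eps p p1 ∧ s.dstep p1 ℓ p2 ∧ s.wtrans p2 σ p''

/-- The δ-extended label set `L^δ` as a set of `DLabel`s. -/
def Ld (s : LTS S A) : Set (DLabel A) := (DLabel.act '' s.L) ∪ {DLabel.δ}

/-- `Utraces s`: δ-extended traces of `s` (from the initial state) that never
pass through a state refusing a subsequent input of the trace. -/
def Utraces (s : LTS S A) : Set (List (DLabel A)) :=
  { σ | (∀ ℓ ∈ σ, ℓ ∈ s.Ld) ∧ (∃ p, s.wtrans s.q0 σ p) ∧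
      ∀ σ1 a σ2, σ = σ1 ++ DLabel.act a :: σ2 → a ∈ s.I →
        ∀ p, s.wtrans s.q0 σ1 p → ∃ p', s.wtrans p [DLabel.act a] p' }

/-- `out p`: the outputs (including quiescence δ) enabled in state `p`. -/
def out (s : LTS S A) (p : S) : Set (DLabel A) :=
  { x | match x with
        | .act a => a ∈ s.U ∧ ∃ p', s.T p (some a) p'
        | .δ => s.quiescent p }

/-- `out` of a set of states. -/
def outSet (s : LTS S A) (P : Set S) : Set (DLabel A) := ⋃ p ∈ P, s.out p

/-- `inp p`: the inputs weakly enabled in state `p`. -/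
def inp (s : LTS S A) (p : S) : Set A :=
  { a | a ∈ s.I ∧ ∃ p', s.wtrans p [DLabel.act a] p' }

/-- The states reached from the initial state after trace `σ`. -/
def after (s : LTS S A) (σ : List (DLabel A)) : Set S :=
  { p' | s.wtrans s.q0 σ p' }

/-- Input-enabledness: every input is weakly enabled in every state. -/
def IOTS (s : LTS S A) : Prop :=
  ∀ q : S, ∀ a ∈ s.I, ∃ q', s.wtrans q [DLabel.act a] q'

/-- Two LTSs are composable iff their output sets are disjoint. -/
def Composable (s : LTS S A) (e : LTS E A) : Prop := Disjoint s.U e.U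

/-- Parallel composition of two LTSs: synchronisation on shared labels,
interleaving on non-shared labels and τ. -/
def par (s : LTS S A) (e : LTS E A) : LTS (S × E) A where
  I := (s.I \ e.U) ∪ (e.I \ s.U)
  U := s.U ∪ e.U
  q0 := (s.q0, e.q0)
  T := fun x ℓ y =>
    (s.T x.1 ℓ y.1 ∧ y.2 = x.2 ∧ (ℓ = none ∨ ∃ a ∈ s.L, ℓ = some a) ∧
      ∀ a ∈ e.L, ℓ ≠ some a) ∨
    (e.T x.2 ℓ y.2 ∧ y.1 = x.1 ∧ (ℓ = none ∨ ∃ a ∈ e.L, ℓ = some a) ∧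
      ∀ a ∈ s.L, ℓ ≠ some a) ∨
    (∃ a ∈ s.L ∩ e.L, ℓ = some a ∧ s.T x.1 (some a) y.1 ∧ e.T x.2 (some a) y.2)

/-- The uioco implementation relation. -/
def uioco (i : LTS E A) (s : LTS S A) : Prop :=
  ∀ σ ∈ s.Utraces, i.outSet (i.after σ) ⊆ s.outSet (s.after σ)

/-- `s.Accepts e`: along every Utrace of `s ‖ e`, every output of `e` that is an
input label of `s` is actually accepted by `s` and is an output of `e`. -/
def Accepts (s : LTS S A) (e : LTS E A) : Prop :=
  ∀ σ ∈ (s.par e).Utraces, ∀ p q, (s.par e).wtrans (s.par e).q0 σ (p, q) →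
    ∀ a, DLabel.act a ∈ e.out q → a ∈ s.I → a ∈ s.inp p ∧ a ∈ e.U

/-- Mutual acceptance. -/
def MutuallyAccepts (s : LTS S A) (e : LTS E A) : Prop := s.Accepts e ∧ e.Accepts s

/-- Isomorphism of LTSs: equal label sets and a bijection on states preserving
the initial state and all transitions (including τ and δ). -/
def Isomorphic (s : LTS S A) (s' : LTS E A) : Prop :=
  s.I = s'.I ∧ s.U = s'.U ∧ ∃ f : S ≃ E, f s.q0 = s'.q0 ∧
    (∀ p p' ℓ, s.T p ℓ p' ↔ s'.T (f p) ℓ (f p')) ∧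
    (∀ p p', s.dstep p DLabel.δ p' ↔ s'.dstep (f p) DLabel.δ (f p'))

open Classical in
/-- Projection of a trace onto a set of labels. -/
noncomputable def proj : List (DLabel A) → Set (DLabel A) → List (DLabel A)
  | [], _ => []
  | ℓ :: σ, 𝓛 => if ℓ ∈ 𝓛 then ℓ :: proj σ 𝓛 else proj σ 𝓛

end LTS

/-! The case of a shared visible label only uses the definition of `s ‖ e`. For δ, a τ-step or
an output of one component at a reachable state would give the composition a τ-step or an
output, except for an output `x` of `s` that is a label, hence (by composability) an input, of `e`.
Reachability along a Utrace is what lets acceptance apply: it makes `x` weakly enabled in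
`e`, so `e` either has a τ-step or synchronises on `x`, and again `s ‖ e` is not quiescent. -/

namespace LTS

variable {S S' E A : Type}

def UReachable (s : LTS S A) (p : S) : Prop :=
  ∃ σ ∈ s.Utraces, s.wtrans s.q0 σ p

theorem tau_or_step_of_wtrans_act {s : LTS S A} {p p' : S} {a : A}
    (h : s.wtrans p [.act a] p') : (∃ p₁, s.T p none p₁) ∨ ∃ p₁, s.T p (some a) p₁ := by
  obtain ⟨p₁, p₂, hε, hstep, -⟩ := h
  rcases hε.cases_head with rfl | ⟨p₀, hτ, -⟩
  · exact .inr ⟨p₂, hstep⟩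
  · exact .inl ⟨p₀, hτ⟩

section Map

variable {s : LTS S A} {s' : LTS S' A} (f : S → S')
  (hT : ∀ p ℓ p', s.T p ℓ p' → s'.T (f p) ℓ (f p'))
  (hq : ∀ p, s.quiescent p → s'.quiescent (f p))
include hT

theorem eps_map {p p' : S} (h : s.eps p p') : s'.eps (f p) (f p') :=
  Relation.ReflTransGen.lift f (fun _ _ ↦ hT _ none _) _ _ h

include hq

theorem dstep_map {p p' : S} {ℓ : DLabel A} (h : s.dstep p ℓ p') : s'.dstep (f p) ℓ (f p') := by
  cases ℓ with
  | act a => exact hT _ _ _ h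
  | δ => obtain ⟨rfl, hp⟩ := h; exact ⟨rfl, hq p hp⟩

theorem wtrans_map : ∀ {σ : List (DLabel A)} {p p' : S},
    s.wtrans p σ p' → s'.wtrans (f p) σ (f p')
  | [], _, _, h => eps_map f hT h
  | _ :: _, _, _, ⟨p₁, p₂, hε, hstep, hrest⟩ =>
    ⟨f p₁, f p₂, eps_map f hT hε, dstep_map f hT hq hstep, wtrans_map hrest⟩

end Map

section Par

variable {s : LTS S A} {e : LTS E A} {p p' : S} {q q' : E}

theorem par_T_tau_left (h : s.T p none p') : (s.par e).T (p, q) none (p', q) :=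
  .inl ⟨h, rfl, .inl rfl, fun _ _ ↦ nofun⟩

theorem par_T_tau_right (h : e.T q none q') : (s.par e).T (p, q) none (p, q') :=
  .inr <| .inl ⟨h, rfl, .inl rfl, fun _ _ ↦ nofun⟩

theorem par_T_right_of_notMem {a : A} (ha : a ∈ e.L) (has : a ∉ s.L)
    (h : e.T q (some a) q') : (s.par e).T (p, q) (some a) (p, q') :=
  .inr <| .inl ⟨h, rfl, .inr ⟨a, ha, rfl⟩, fun _ hb hab ↦ has (Option.some_injective _ hab ▸ hb)⟩

theorem par_T_sync {a : A} (has : a ∈ s.L) (hae : a ∈ e.L)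
    (hs : s.T p (some a) p') (he : e.T q (some a) q') : (s.par e).T (p, q) (some a) (p', q') :=
  .inr <| .inr ⟨a, ⟨has, hae⟩, rfl, hs, he⟩

theorem T_of_par_T_shared {a : A} (has : a ∈ s.L) (hae : a ∈ e.L)
    (h : (s.par e).T (p, q) (some a) (p', q')) : s.T p (some a) p' ∧ e.T q (some a) q' := by
  rcases h with ⟨-, -, -, hne⟩ | ⟨-, -, -, hne⟩ | ⟨b, -, hab, hs, he⟩
  · exact absurd rfl (hne a hae)
  · exact absurd rfl (hne a has)
  · obtain rfl := Option.some_injective _ hab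
    exact ⟨hs, he⟩

theorem par_T_swap {ℓ : Option A} (h : (s.par e).T (p, q) ℓ (p', q')) :
    (e.par s).T (q, p) ℓ (q', p') := by
  rcases h with h | h | ⟨a, ⟨has, hae⟩, h⟩
  · exact .inr (.inl h)
  · exact .inl h
  · exact .inr (.inr ⟨a, ⟨hae, has⟩, h.1, h.2.2, h.2.1⟩)

theorem par_quiescent_swap (h : (s.par e).quiescent (p, q)) : (e.par s).quiescent (q, p) :=
  ⟨fun x hx r hT ↦ h.1 x hx.symm r.swap (par_T_swap hT),
    fun r hT ↦ h.2 r.swap (par_T_swap hT)⟩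

theorem par_wtrans_swap {σ : List (DLabel A)} (h : (s.par e).wtrans (p, q) σ (p', q')) :
    (e.par s).wtrans (q, p) σ (q', p') :=
  wtrans_map Prod.swap (fun _ _ _ ↦ par_T_swap) (fun _ ↦ par_quiescent_swap) h

theorem par_Utraces_swap {σ : List (DLabel A)} (h : σ ∈ (s.par e).Utraces) :
    σ ∈ (e.par s).Utraces := by
  obtain ⟨hlabels, ⟨r, hr⟩, henabled⟩ := h
  refine ⟨fun ℓ hℓ ↦ ?_, ⟨r.swap, par_wtrans_swap hr⟩, fun σ₁ a σ₂ hσ ha r hr ↦ ?_⟩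
  · rcases hlabels ℓ hℓ with ⟨a, ha, rfl⟩ | hδ
    · refine .inl ⟨a, ?_, rfl⟩
      simp only [L, par, Set.mem_union, Set.mem_sdiff] at ha ⊢
      tauto
    · exact .inr hδ
  · have ha' : a ∈ (s.par e).I := by
      simp only [par, Set.mem_union] at ha ⊢
      tauto
    obtain ⟨r', hr'⟩ := henabled σ₁ a σ₂ hσ ha' r.swap (par_wtrans_swap hr)
    exact ⟨r'.swap, par_wtrans_swap hr'⟩

theorem UReachable.par_swap (h : (s.par e).UReachable (p, q)) : (e.par s).UReachable (q, p) :=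
  let ⟨σ, hσ, hw⟩ := h
  ⟨σ, par_Utraces_swap hσ, par_wtrans_swap hw⟩

theorem quiescent_right_of_par_quiescent (hc : Composable s e) (hacc : s.Accepts e)
    (hreach : (s.par e).UReachable (p, q)) (hq : (s.par e).quiescent (p, q)) :
    e.quiescent q := by
  refine ⟨fun x hxU q' hx ↦ ?_, fun q' hτ ↦ hq.2 _ (par_T_tau_right hτ)⟩
  by_cases hxs : x ∈ s.L
  · have hxI : x ∈ s.I := hxs.resolve_right fun hxU' ↦ hc.ne_of_mem hxU' hxU rfl
    obtain ⟨σ, hσ, hw⟩ := hreach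
    obtain ⟨⟨-, p', hp'⟩, -⟩ := hacc σ hσ p q hw x ⟨hxU, q', hx⟩ hxI
    rcases tau_or_step_of_wtrans_act hp' with ⟨p₁, hτ⟩ | ⟨p₁, hxs'⟩
    · exact hq.2 _ (par_T_tau_left hτ)
    · exact hq.1 x (.inr hxU) _ (par_T_sync hxs (.inr hxU) hxs' hx)
  · exact hq.1 x (.inr hxU) _ (par_T_right_of_notMem (.inr hxU) hxs hx)

theorem quiescent_left_of_par_quiescent (hc : Composable s e) (hacc : e.Accepts s)
    (hreach : (s.par e).UReachable (p, q)) (hq : (s.par e).quiescent (p, q)) :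
    s.quiescent p :=
  quiescent_right_of_par_quiescent hc.symm hacc hreach.par_swap (par_quiescent_swap hq)

end Par

end LTS

theorem par_step_shared_of_mutuallyAccepts_general {S E A : Type} (s : LTS S A) (e : LTS E A)
    (hc : LTS.Composable s e)
    (hma : s.MutuallyAccepts e)
    (ℓ : DLabel A) (hℓ : (∃ a ∈ s.L ∩ e.L, ℓ = DLabel.act a) ∨ ℓ = DLabel.δ)
    (p1 p2 : S) (q1 q2 : E)
    (hreach : ∃ σ ∈ (s.par e).Utraces, (s.par e).wtrans (s.par e).q0 σ (p1, q1))
    (hstep : (s.par e).dstep (p1, q1) ℓ (p2, q2)) :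
    s.dstep p1 ℓ p2 ∧ e.dstep q1 ℓ q2 := by
  rcases hℓ with ⟨a, ⟨has, hae⟩, rfl⟩ | rfl
  · exact LTS.T_of_par_T_shared has hae hstep
  · obtain ⟨heq, hq⟩ := hstep
    obtain ⟨rfl, rfl⟩ := Prod.mk.inj heq
    exact ⟨⟨rfl, LTS.quiescent_left_of_par_quiescent hc hma.2 hreach hq⟩,
      ⟨rfl, LTS.quiescent_right_of_par_quiescent hc hma.1 hreach hq⟩⟩

/-- for mutually accepting composable `s`, `e` and a state of the
composition reachable by a Utrace, a step on a shared label or on δ is a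
synchronised step of both components. -/
theorem par_step_shared_of_mutuallyAccepts {S E A : Type} (s : LTS S A) (e : LTS E A)
    (hs : s.WF) (he : e.WF) (hc : LTS.Composable s e)
    (hma : s.MutuallyAccepts e)
    (ℓ : DLabel A) (hℓ : (∃ a ∈ s.L ∩ e.L, ℓ = DLabel.act a) ∨ ℓ = DLabel.δ)
    (p1 p2 : S) (q1 q2 : E)
    (hreach : ∃ σ ∈ (s.par e).Utraces, (s.par e).wtrans (s.par e).q0 σ (p1, q1))
    (hstep : (s.par e).dstep (p1, q1) ℓ (p2, q2)) :
    s.dstep p1 ℓ p2 ∧ e.dstep q1 ℓ q2 :=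
  par_step_shared_of_mutuallyAccepts_general s e hc hma ℓ hℓ p1 p2 q1 q2 hreach hstep
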